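/- Let T be a bounded linear operator on a complex Hilbert space H and c > 0. Then w(T)⁴ ≤ ((2+3c)/(32(1+c)))·‖|T|⁴ + |T*|⁴‖ + ((2+3c)/(16(1+c)))·w(|T*|²|T|²) + ((6+5c)/(16(1+c)))·w(T²)·‖|T|² + |T*|²‖. -/

import Mathlib

open scoped InnerProductSpace
open ContinuousLinearMap Finset

variable {H : Type*} [NormedAddCommGroup H] [InnerProductSpace ℂ H] [CompleteSpace H]

/-- The numerical radius of a bounded operator. -/
noncomputable def numRadius (T : H →L[ℂ] H) : ℝ :=
  sSup ((fun x : H => ‖⟪T x, x⟫_ℂ‖) '' {x : H | ‖x‖ = 1})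

/-- The absolute value |T| = (T*T)^(1/2). -/
noncomputable def opAbs (T : H →L[ℂ] H) : H →L[ℂ] H :=
  CFC.sqrt (ContinuousLinearMap.adjoint T * T)

/-- Real power of a (positive) operator via continuous functional calculus. -/
noncomputable def opPow (T : H →L[ℂ] H) (r : ℝ) : H →L[ℂ] H :=
  CFC.rpow T r

set_option maxHeartbeats 1000000
set_option synthInstance.maxHeartbeats 1000000
set_option linter.unusedSectionVars false

lemma buzano {e u v : H} (he : ‖e‖ = 1) :
    ‖⟪u, e⟫_ℂ * ⟪e, v⟫_ℂ‖ ≤ (‖⟪u, v⟫_ℂ‖ + ‖u‖ * ‖v‖) / 2 := by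
  set w : H := (2 : ℂ) • (⟪e, v⟫_ℂ • e) with hw
  have hkey : ⟪u, e⟫_ℂ * ⟪e, v⟫_ℂ = (⟪u, v⟫_ℂ + ⟪u, w - v⟫_ℂ) / 2 := by
    rw [inner_sub_right, hw, inner_smul_right, inner_smul_right]
    ring
  have hnormw : ‖w - v‖ = ‖v‖ := by
    have hip : ⟪w, v⟫_ℂ = 2 * (‖⟪e, v⟫_ℂ‖ ^ 2 : ℝ) := by
      rw [hw, inner_smul_left, inner_smul_left,
        mul_comm (starRingEnd ℂ ⟪e, v⟫_ℂ) ⟪e, v⟫_ℂ, Complex.mul_conj']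
      simp [Complex.normSq_eq_norm_sq, map_ofNat]
    have hre : RCLike.re ⟪w, v⟫_ℂ = 2 * ‖⟪e, v⟫_ℂ‖ ^ 2 := by
      rw [hip]; norm_cast
    have hnw : ‖w‖ = 2 * ‖⟪e, v⟫_ℂ‖ := by
      rw [hw, norm_smul, norm_smul, he, mul_one]; simp
    have h2 : ‖w - v‖ ^ 2 = ‖v‖ ^ 2 := by
      have hexp := @norm_sub_sq ℂ H _ _ _ w v
      rw [hexp, hnw, hre]; ring
    nlinarith [norm_nonneg (w - v), norm_nonneg v]
  calc ‖⟪u, e⟫_ℂ * ⟪e, v⟫_ℂ‖ = ‖⟪u, v⟫_ℂ + ⟪u, w - v⟫_ℂ‖ / 2 := by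
        rw [hkey]; simp [norm_div]
    _ ≤ (‖⟪u, v⟫_ℂ‖ + ‖⟪u, w - v⟫_ℂ‖) / 2 := by
        gcongr; exact norm_add_le _ _
    _ ≤ (‖⟪u, v⟫_ℂ‖ + ‖u‖ * ‖v‖) / 2 := by
        gcongr
        calc ‖⟪u, w - v⟫_ℂ‖ ≤ ‖u‖ * ‖w - v‖ := norm_inner_le_norm u (w - v)
          _ = ‖u‖ * ‖v‖ := by rw [hnormw]

lemma numRadius_bddAbove (T : H →L[ℂ] H) :
    BddAbove ((fun x : H => ‖⟪T x, x⟫_ℂ‖) '' {x : H | ‖x‖ = 1}) := by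
  refine ⟨‖T‖, ?_⟩
  rintro y ⟨x, hx, rfl⟩
  simp only [Set.mem_setOf_eq] at hx
  calc ‖⟪T x, x⟫_ℂ‖ ≤ ‖T x‖ * ‖x‖ := norm_inner_le_norm _ _
    _ ≤ ‖T‖ * ‖x‖ * ‖x‖ := by gcongr; exact le_opNorm T x
    _ = ‖T‖ := by rw [hx]; ring

lemma le_numRadius (T : H →L[ℂ] H) {x : H} (hx : ‖x‖ = 1) :
    ‖⟪T x, x⟫_ℂ‖ ≤ numRadius T :=
  le_csSup (numRadius_bddAbove T) ⟨x, hx, rfl⟩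

lemma numRadius_nonneg (T : H →L[ℂ] H) : 0 ≤ numRadius T :=
  Real.sSup_nonneg (by rintro y ⟨x, hx, rfl⟩; exact norm_nonneg _)

lemma opAbs_sq (T : H →L[ℂ] H) : opAbs T ^ 2 = adjoint T * T := by
  have h : (0 : H →L[ℂ] H) ≤ adjoint T * T := by
    have := star_mul_self_nonneg T
    rwa [star_eq_adjoint] at this
  exact CFC.sq_sqrt _ h

lemma opAbs_adj_sq (T : H →L[ℂ] H) : opAbs (adjoint T) ^ 2 = T * adjoint T := by
  rw [opAbs_sq, adjoint_adjoint]

lemma inner_opAbs_sq (T : H →L[ℂ] H) (x : H) :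
    ⟪(opAbs T ^ 2) x, x⟫_ℂ = (‖T x‖ ^ 2 : ℝ) := by
  rw [opAbs_sq, mul_apply_eq_comp, adjoint_inner_left, inner_self_eq_norm_sq_to_K]
  norm_cast

lemma inner_opAbs_adj_sq (T : H →L[ℂ] H) (x : H) :
    ⟪x, (opAbs (adjoint T) ^ 2) x⟫_ℂ = (‖adjoint T x‖ ^ 2 : ℝ) := by
  rw [opAbs_adj_sq, mul_apply_eq_comp]
  rw [show ⟪x, T ((adjoint T) x)⟫_ℂ = ⟪adjoint T x, adjoint T x⟫_ℂ from
    (adjoint_inner_left T (adjoint T x) x).symm]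
  rw [inner_self_eq_norm_sq_to_K]
  norm_cast

lemma adj_opAbs_sq (T : H →L[ℂ] H) : adjoint (opAbs T ^ 2) = opAbs T ^ 2 := by
  rw [opAbs_sq, ← star_eq_adjoint, star_mul, star_eq_adjoint, star_eq_adjoint, adjoint_adjoint]

theorem stmt15 (T : H →L[ℂ] H) (c : ℝ) (hc : 0 < c) :
    numRadius T ^ 4
      ≤ (2 + 3 * c) / (32 * (1 + c)) * ‖opAbs T ^ 4 + opAbs (adjoint T) ^ 4‖
        + (2 + 3 * c) / (16 * (1 + c)) * numRadius (opAbs (adjoint T) ^ 2 * opAbs T ^ 2)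
        + (6 + 5 * c) / (16 * (1 + c)) * (numRadius (T ^ 2)
            * ‖opAbs T ^ 2 + opAbs (adjoint T) ^ 2‖) := by
  set A := opAbs T ^ 2 with hA
  set B := opAbs (adjoint T) ^ 2 with hB
  set w2 := numRadius (T ^ 2) with hw2
  set wp := numRadius (B * A) with hwp
  set nn := ‖opAbs T ^ 4 + opAbs (adjoint T) ^ 4‖ with hnn
  set ws := ‖A + B‖ with hws
  have hw2n : 0 ≤ w2 := numRadius_nonneg _
  have hwpn : 0 ≤ wp := numRadius_nonneg _
  have hnnn : 0 ≤ nn := norm_nonneg _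
  have hwsn : 0 ≤ ws := norm_nonneg _
  set R : ℝ := (2 + 3 * c) / (32 * (1 + c)) * nn + (2 + 3 * c) / (16 * (1 + c)) * wp
      + (6 + 5 * c) / (16 * (1 + c)) * (w2 * ws) with hR
  have h1c : (0:ℝ) < 1 + c := by linarith
  have hRnn : 0 ≤ R := by
    have : 0 ≤ w2 * ws := mul_nonneg hw2n hwsn
    have h1 : 0 ≤ (2 + 3 * c) / (32 * (1 + c)) := by positivity
    have h2 : 0 ≤ (2 + 3 * c) / (16 * (1 + c)) := by positivity
    have h3 : 0 ≤ (6 + 5 * c) / (16 * (1 + c)) := by positivity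
    rw [hR]; positivity
  -- pointwise bound
  have hpt : ∀ x : H, ‖x‖ = 1 → ‖⟪T x, x⟫_ℂ‖ ^ 4 ≤ R := by
    intro x hx
    set t := ‖⟪T x, x⟫_ℂ‖ with ht
    set p := ‖⟪(T ^ 2) x, x⟫_ℂ‖ with hp
    set q := ‖T x‖ * ‖adjoint T x‖ with hq
    set a := ‖T x‖ ^ 2 with ha
    set b := ‖adjoint T x‖ ^ 2 with hb
    -- Buzano 1 : t^2 ≤ (p+q)/2
    have hbuz1 : t ^ 2 ≤ (p + q) / 2 := by
      have h := buzano (u := T x) (v := adjoint T x) hx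
      have e1 : ⟪x, adjoint T x⟫_ℂ = ⟪T x, x⟫_ℂ := adjoint_inner_right T x x
      have e2 : ⟪T x, adjoint T x⟫_ℂ = ⟪(T ^ 2) x, x⟫_ℂ := by
        rw [adjoint_inner_right, sq, mul_apply_eq_comp]
      rw [e1, e2] at h
      calc t ^ 2 = ‖⟪T x, x⟫_ℂ * ⟪T x, x⟫_ℂ‖ := by rw [norm_mul]; ring
        _ ≤ (p + q) / 2 := h
    -- Buzano 2 : a*b ≤ (wp + nn/2)/2  i.e. q^2 ≤ wp/2 + nn/4
    have hab : a * b ≤ wp / 2 + nn / 4 := by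
      have h := buzano (u := A x) (v := B x) hx
      have e1 : ⟪A x, x⟫_ℂ = (a : ℂ) := by rw [hA, inner_opAbs_sq]
      have e2 : ⟪x, B x⟫_ℂ = (b : ℂ) := by rw [hB, inner_opAbs_adj_sq]
      have e3 : ⟪A x, B x⟫_ℂ = ⟪(B * A) x, x⟫_ℂ := by
        rw [mul_apply_eq_comp]
        rw [show ⟪B (A x), x⟫_ℂ = ⟪adjoint B (A x), x⟫_ℂ by
          rw [hB, adj_opAbs_sq (adjoint T)]]
        rw [adjoint_inner_left]
      rw [e1, e2, e3] at h
      have hab' : ‖(a : ℂ) * (b : ℂ)‖ = a * b := by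
        rw [norm_mul, Complex.norm_real, Complex.norm_real,
          Real.norm_of_nonneg (by positivity), Real.norm_of_nonneg (by positivity)]
      rw [hab'] at h
      have hBA : ‖⟪(B * A) x, x⟫_ℂ‖ ≤ wp := le_numRadius _ hx
      -- ‖A x‖ * ‖B x‖ ≤ nn / 2
      have hN : ‖A x‖ * ‖B x‖ ≤ nn / 2 := by
        have hsq : ‖A x‖ * ‖B x‖ ≤ (‖A x‖ ^ 2 + ‖B x‖ ^ 2) / 2 := by
          nlinarith [sq_nonneg (‖A x‖ - ‖B x‖)]
        have hsum : (‖A x‖ ^ 2 : ℝ) + ‖B x‖ ^ 2 ≤ nn := by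
          have eA : ⟪(A ^ 2) x, x⟫_ℂ = (‖A x‖ ^ 2 : ℝ) := by
            rw [sq, mul_apply_eq_comp,
              show ⟪A (A x), x⟫_ℂ = ⟪adjoint A (A x), x⟫_ℂ by rw [hA, adj_opAbs_sq],
              adjoint_inner_left, inner_self_eq_norm_sq_to_K]
            norm_cast
          have eB : ⟪(B ^ 2) x, x⟫_ℂ = (‖B x‖ ^ 2 : ℝ) := by
            rw [sq, mul_apply_eq_comp,
              show ⟪B (B x), x⟫_ℂ = ⟪adjoint B (B x), x⟫_ℂ by
                rw [hB, adj_opAbs_sq (adjoint T)],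
              adjoint_inner_left, inner_self_eq_norm_sq_to_K]
            norm_cast
          have eN : ⟪(A ^ 2 + B ^ 2) x, x⟫_ℂ = ((‖A x‖ ^ 2 + ‖B x‖ ^ 2 : ℝ) : ℂ) := by
            rw [add_apply, inner_add_left, eA, eB]; norm_cast
          have hA4 : A ^ 2 = opAbs T ^ 4 := by rw [hA, ← pow_mul]
          have hB4 : B ^ 2 = opAbs (adjoint T) ^ 4 := by rw [hB, ← pow_mul]
          calc (‖A x‖ ^ 2 : ℝ) + ‖B x‖ ^ 2
              = ‖⟪(A ^ 2 + B ^ 2) x, x⟫_ℂ‖ := by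
                rw [eN, Complex.norm_real, Real.norm_of_nonneg (by positivity)]
            _ ≤ ‖(A ^ 2 + B ^ 2) x‖ * ‖x‖ := norm_inner_le_norm _ _
            _ ≤ ‖A ^ 2 + B ^ 2‖ * ‖x‖ * ‖x‖ := by gcongr; exact le_opNorm _ x
            _ = nn := by rw [hx, hA4, hB4, hnn]; ring
        linarith
      calc a * b ≤ (wp + ‖A x‖ * ‖B x‖) / 2 := by
            have := le_trans h (by linarith [hBA] : (‖⟪(B * A) x, x⟫_ℂ‖ + ‖A x‖ * ‖B x‖) / 2 ≤ (wp + ‖A x‖ * ‖B x‖) / 2)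
            exact this
        _ ≤ (wp + nn / 2) / 2 := by linarith
        _ = wp / 2 + nn / 4 := by ring
    have hq2 : q ^ 2 = a * b := by rw [hq, ha, hb]; ring
    -- q ≤ ws/2
    have hqws : q ≤ ws / 2 := by
      have hsum : a + b ≤ ws := by
        have eS : ⟪(A + B) x, x⟫_ℂ = ((a + b : ℝ) : ℂ) := by
          rw [add_apply, inner_add_left, hA, inner_opAbs_sq,
            show ⟪B x, x⟫_ℂ = (b:ℂ) by
              rw [show ⟪B x, x⟫_ℂ = ⟪adjoint B x, x⟫_ℂ by rw [hB, adj_opAbs_sq (adjoint T)],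
                adjoint_inner_left, hB, inner_opAbs_adj_sq]]
          norm_cast
        calc a + b = ‖⟪(A + B) x, x⟫_ℂ‖ := by
              rw [eS, Complex.norm_real, Real.norm_of_nonneg (by positivity)]
          _ ≤ ‖(A + B) x‖ * ‖x‖ := norm_inner_le_norm _ _
          _ ≤ ‖A + B‖ * ‖x‖ * ‖x‖ := by gcongr; exact le_opNorm _ x
          _ = ws := by rw [hx]; ring
      have : q ≤ (a + b) / 2 := by
        rw [hq, ha, hb] at *
        nlinarith [sq_nonneg (‖T x‖ - ‖adjoint T x‖)]
      linarith
    have hpw2 : p ≤ w2 := le_numRadius _ hx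
    have hpq : p ≤ q := by
      rw [hp, hq]
      rw [show ⟪(T ^ 2) x, x⟫_ℂ = ⟪T x, adjoint T x⟫_ℂ by
        rw [adjoint_inner_right, sq, mul_apply_eq_comp]]
      exact norm_inner_le_norm _ _
    have hqn : 0 ≤ q := by rw [hq]; positivity
    have hpn : 0 ≤ p := norm_nonneg _
    have htn : 0 ≤ t := norm_nonneg _
    -- scalar combination
    have habq : q ^ 2 ≤ wp / 2 + nn / 4 := by rw [hq2]; exact hab
    have hP1 : p ^ 2 ≤ w2 * ws / 2 := by nlinarith
    have hP2 : p ^ 2 ≤ wp / 2 + nn / 4 := by nlinarith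
    have hPQ : p * q ≤ w2 * (ws / 2) := by
      exact mul_le_mul hpw2 hqws hqn hw2n
    have ht4 : t ^ 4 ≤ (p + q) ^ 2 / 4 := by nlinarith
    have main : 32 * (1 + c) * t ^ 4
        ≤ (2 + 3 * c) * nn + 2 * (2 + 3 * c) * wp + 2 * (6 + 5 * c) * (w2 * ws) := by
      have e1 : 32 * (1 + c) * t ^ 4 ≤ 8 * (1 + c) * (p ^ 2 + 2 * (p * q) + q ^ 2) := by
        nlinarith
      have e2 : (8 + 4 * c) * p ^ 2 ≤ (8 + 4 * c) * (w2 * ws / 2) := by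
        have : (0:ℝ) ≤ 8 + 4 * c := by linarith
        exact mul_le_mul_of_nonneg_left hP1 this
      have e3 : (4 * c) * p ^ 2 ≤ (4 * c) * (wp / 2 + nn / 4) := by
        have : (0:ℝ) ≤ 4 * c := by linarith
        exact mul_le_mul_of_nonneg_left hP2 this
      have e4 : 16 * (1 + c) * (p * q) ≤ 16 * (1 + c) * (w2 * (ws / 2)) := by
        have : (0:ℝ) ≤ 16 * (1 + c) := by linarith
        exact mul_le_mul_of_nonneg_left hPQ this
      have e5 : 8 * (1 + c) * q ^ 2 ≤ 8 * (1 + c) * (wp / 2 + nn / 4) := by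
        have : (0:ℝ) ≤ 8 * (1 + c) := by linarith
        exact mul_le_mul_of_nonneg_left habq this
      nlinarith [e1, e2, e3, e4, e5]
    have : t ^ 4 ≤ ((2 + 3 * c) * nn + 2 * (2 + 3 * c) * wp
        + 2 * (6 + 5 * c) * (w2 * ws)) / (32 * (1 + c)) := by
      rw [le_div_iff₀ (by positivity)]
      linarith [main]
    calc t ^ 4 ≤ ((2 + 3 * c) * nn + 2 * (2 + 3 * c) * wp
          + 2 * (6 + 5 * c) * (w2 * ws)) / (32 * (1 + c)) := this
      _ = R := by rw [hR]; field_simp; ring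
  -- conclude : numRadius T ≤ R^(1/4)
  have hle : numRadius T ≤ R ^ ((1:ℝ)/4) := by
    apply Real.sSup_le
    · rintro y ⟨x, hx, rfl⟩
      simp only [Set.mem_setOf_eq] at hx
      have h4 := hpt x hx
      have hy : (0:ℝ) ≤ ‖⟪T x, x⟫_ℂ‖ := norm_nonneg _
      calc ‖⟪T x, x⟫_ℂ‖ = (‖⟪T x, x⟫_ℂ‖ ^ 4) ^ ((1:ℝ)/4) := by
            rw [← Real.rpow_natCast _ 4, ← Real.rpow_mul hy]
            norm_num
        _ ≤ R ^ ((1:ℝ)/4) := by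
            apply Real.rpow_le_rpow (by positivity) h4 (by norm_num)
    · positivity
  have hfin : numRadius T ^ 4 ≤ R := by
    have h0 : 0 ≤ numRadius T := numRadius_nonneg T
    calc numRadius T ^ 4 ≤ (R ^ ((1:ℝ)/4)) ^ 4 := by
          exact pow_le_pow_left₀ h0 hle 4
      _ = R := by
        rw [← Real.rpow_natCast (R ^ ((1:ℝ)/4)) 4, ← Real.rpow_mul hRnn]
        norm_num
  exact hfin
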